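/- arXiv:2509.12605 — 8 statements merged into one kernel-verified Lean document; each statement's English description precedes it below -/
import Mathlib

section
/- Let S be a real symmetric N×N matrix and h a real polynomial such that the matrix h(S) is positive semidefinite. Then there exists a real polynomial g such that g(S) is positive semidefinite and g(S)² = h(S). (The polynomial g may be chosen by Lagrange interpolation so that g(λ) = √(h(λ)) at every eigenvalue λ of S.) -/
open Polynomial Matrix

private noncomputable def conjAlgHom {N : ℕ} (u : Matrix (Fin N) (Fin N) ℝ)
    (hu : u * star u = 1) (hu' : star u * u = 1) :
    Matrix (Fin N) (Fin N) ℝ →ₐ[ℝ] Matrix (Fin N) (Fin N) ℝ where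
  toFun A := u * A * star u
  map_one' := by show u * 1 * star u = 1; rw [mul_one, hu]
  map_mul' A B := by
    simp only [mul_assoc, ← mul_assoc (star u) u, hu', one_mul]
  map_zero' := by simp
  map_add' A B := by noncomm_ring
  commutes' r := by
    simp [Algebra.algebraMap_eq_smul_one, mul_smul_comm, smul_mul_assoc, hu]

private lemma aeval_conj {N : ℕ} (u D : Matrix (Fin N) (Fin N) ℝ)
    (hu : u * star u = 1) (hu' : star u * u = 1) (p : Polynomial ℝ) :
    aeval (u * D * star u) p = u * aeval D p * star u :=
  aeval_algHom_apply (conjAlgHom u hu hu') D p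

private lemma aeval_diagonal {N : ℕ} (d : Fin N → ℝ) (p : Polynomial ℝ) :
    aeval (diagonal d) p = diagonal (fun i => eval (d i) p) := by
  have h1 : aeval (diagonal d) p = diagonal (aeval d p) :=
    aeval_algHom_apply (diagonalAlgHom ℝ) d p
  have h2 : aeval d p = fun i => eval (d i) p := by
    funext i
    rw [← coe_aeval_eq_eval]
    exact (aeval_algHom_apply (Pi.evalAlgHom ℝ (fun _ : Fin N => ℝ) i) d p).symm
  rw [h1, h2]

/-- If `S` is real symmetric and `h(S)` is positive semidefinite, then there is a
real polynomial `g` with `g(S)` positive semidefinite and `g(S)² = h(S)` (a polynomial square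
root, obtainable by Lagrange interpolation of `√h` at the eigenvalues of `S`). -/
theorem exists_polynomial_sqrt_of_posSemidef
    {N : ℕ} (S : Matrix (Fin N) (Fin N) ℝ) (hS : S.IsSymm)
    (h : Polynomial ℝ) (hpsd : (aeval S h).PosSemidef) :
    ∃ g : Polynomial ℝ, (aeval S g).PosSemidef ∧ (aeval S g) ^ 2 = aeval S h := by
  have hH : S.IsHermitian := by
    rw [Matrix.IsHermitian]
    ext i j
    simp only [conjTranspose_apply, star_trivial]
    exact (congrFun (congrFun hS j) i).symm
  set u : Matrix (Fin N) (Fin N) ℝ := (hH.eigenvectorUnitary : Matrix (Fin N) (Fin N) ℝ) with hu_def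
  set lam := hH.eigenvalues with hlam
  have hu : u * star u = 1 := Matrix.mem_unitaryGroup_iff.mp hH.eigenvectorUnitary.2
  have hu' : star u * u = 1 := Matrix.mem_unitaryGroup_iff'.mp hH.eigenvectorUnitary.2
  have spec : S = u * diagonal lam * star u := by
    simpa using hH.spectral_theorem
  have key : ∀ p : Polynomial ℝ,
      aeval S p = u * diagonal (fun i => eval (lam i) p) * star u := by
    intro p
    rw [spec, aeval_conj u _ hu hu', aeval_diagonal]
  -- eigenvalues of h(S) are nonneg
  have hd : ∀ i, 0 ≤ eval (lam i) h := by
    have h2 : star u * aeval S h * u = diagonal (fun i => eval (lam i) h) := by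
      rw [key h]
      calc star u * (u * diagonal (fun i => eval (lam i) h) * star u) * u
          = (star u * u) * diagonal (fun i => eval (lam i) h) * (star u * u) := by
            noncomm_ring
        _ = diagonal (fun i => eval (lam i) h) := by rw [hu']; simp
    have h3 := hpsd.conjTranspose_mul_mul_same u
    rw [← Matrix.star_eq_conjTranspose, h2] at h3
    exact fun i => posSemidef_diagonal_iff.mp h3 i
  -- the interpolating polynomial
  set g : Polynomial ℝ :=
    Lagrange.interpolate (Finset.univ.image lam) id (fun t => Real.sqrt (eval t h)) with hg
  have geval : ∀ i, eval (lam i) g = Real.sqrt (eval (lam i) h) := by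
    intro i
    exact Lagrange.eval_interpolate_at_node _ (Set.injOn_id _)
      (Finset.mem_image_of_mem lam (Finset.mem_univ i))
  refine ⟨g, ?_, ?_⟩
  · rw [key g]
    have : (diagonal (fun i => eval (lam i) g)).PosSemidef :=
      Matrix.PosSemidef.diagonal fun i => by rw [geval i]; exact Real.sqrt_nonneg _
    simpa [Matrix.star_eq_conjTranspose] using this.mul_mul_conjTranspose_same u
  · rw [key g, key h]
    rw [pow_two]
    calc u * diagonal (fun i => eval (lam i) g) * star u *
          (u * diagonal (fun i => eval (lam i) g) * star u)
        = u * (diagonal (fun i => eval (lam i) g) * (star u * u) *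
            diagonal (fun i => eval (lam i) g)) * star u := by noncomm_ring
      _ = u * diagonal (fun i => eval (lam i) h) * star u := by
          rw [hu', mul_one, diagonal_mul_diagonal,
            show (fun i => eval (lam i) g * eval (lam i) g) = fun i => eval (lam i) h from
              funext fun i => by rw [geval i, Real.mul_self_sqrt (hd i)]]
end

section
/- Let S be a real symmetric N×N matrix, p and h real polynomials, and let x be a random vector in ℝ^N with square-integrable components satisfying E[x] = 0 and E[x xᵀ] = p(S). Then the random vector H x with H = h(S) satisfies E[H x] = 0 and E[(H x)(H x)ᵀ] = (h² · p)(S); in particular, H x is again stationary. (Stationarity is preserved under transmission through polynomial channels.) -/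
open MeasureTheory Polynomial Matrix

/-- The mean (componentwise expectation) of a random vector. -/
noncomputable def meanVec {Ω : Type*} [MeasurableSpace Ω] (μ : Measure Ω) {N : ℕ}
    (x : Ω → Fin N → ℝ) : Fin N → ℝ :=
  fun i => ∫ ω, x ω i ∂μ

/-- The (cross-)covariance matrix `E[x yᵀ]` of random vectors with zero mean. -/
noncomputable def covMat {Ω : Type*} [MeasurableSpace Ω] (μ : Measure Ω) {N : ℕ}
    (x y : Ω → Fin N → ℝ) : Matrix (Fin N) (Fin N) ℝ :=
  Matrix.of fun i j => ∫ ω, x ω i * y ω j ∂μ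

lemma aeval_transpose {N : ℕ} (S : Matrix (Fin N) (Fin N) ℝ) (hS : S.IsSymm)
    (q : Polynomial ℝ) : (aeval S q : Matrix (Fin N) (Fin N) ℝ)ᵀ = aeval S q := by
  induction q using Polynomial.induction_on' with
  | add a b ha hb => simp [map_add, Matrix.transpose_add, ha, hb]
  | monomial n a =>
      rw [aeval_monomial, Algebra.algebraMap_eq_smul_one]
      simp [Matrix.transpose_mul, Matrix.transpose_pow, hS.eq, smul_mul_assoc,
        mul_smul_comm]

/-- Stationarity is preserved under transmission through polynomial channels:
if `E[x] = 0` and `E[x xᵀ] = p(S)`, then `H x` with `H = h(S)` has zero mean and covariance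
`(h² p)(S)`. -/
theorem stationary_preserved_polynomial_channel
    {Ω : Type*} [MeasurableSpace Ω] (μ : Measure Ω) [IsProbabilityMeasure μ]
    {N : ℕ} (S : Matrix (Fin N) (Fin N) ℝ) (hS : S.IsSymm)
    (p h : Polynomial ℝ) (H : Matrix (Fin N) (Fin N) ℝ) (hH : H = aeval S h)
    (x : Ω → Fin N → ℝ)
    (hxL2 : ∀ i, MemLp (fun ω => x ω i) 2 μ)
    (hxMean : meanVec μ x = 0)
    (hxCov : covMat μ x x = aeval S p) :
    meanVec μ (fun ω => H.mulVec (x ω)) = 0 ∧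
      covMat μ (fun ω => H.mulVec (x ω)) (fun ω => H.mulVec (x ω)) = aeval S (h ^ 2 * p) := by
  have hInt : ∀ i, Integrable (fun ω => x ω i) μ :=
    fun i => (hxL2 i).integrable (by norm_num)
  have hIntMul : ∀ i j, Integrable (fun ω => x ω i * x ω j) μ :=
    fun i j => by
      have := ((hxL2 j).smul (r := 1) (hxL2 i)).integrable le_rfl
      simpa [smul_eq_mul, Pi.mul_def] using this
  constructor
  · funext i
    have : (fun ω => H.mulVec (x ω) i) = fun ω => ∑ k, H i k * x ω k := by
      funext ω; simp [Matrix.mulVec, dotProduct]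
    simp only [meanVec, this]
    rw [integral_finset_sum]
    · have h0 : ∀ k, ∫ ω, x ω k ∂μ = 0 := fun k => congrFun hxMean k
      simp only [integral_const_mul, h0, mul_zero, Finset.sum_const_zero, Pi.zero_apply]
    · exact fun k _ => (hInt k).const_mul _
  · have key : covMat μ (fun ω => H.mulVec (x ω)) (fun ω => H.mulVec (x ω))
        = H * covMat μ x x * Hᵀ := by
      ext i j
      have expand : ∀ ω, H.mulVec (x ω) i * H.mulVec (x ω) j
          = ∑ k, ∑ l, H i k * H j l * (x ω k * x ω l) := by
        intro ω
        simp only [Matrix.mulVec, dotProduct, Finset.sum_mul_sum]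
        refine Finset.sum_congr rfl fun k _ => Finset.sum_congr rfl fun l _ => by ring
      simp only [covMat, Matrix.of_apply, expand]
      rw [integral_finset_sum _ (fun k _ => integrable_finset_sum _
        (fun l _ => ((hIntMul k l).const_mul _)))]
      simp only [integral_finset_sum _ (fun l (_ : l ∈ Finset.univ) => ((hIntMul _ l).const_mul _)),
        integral_const_mul]
      simp only [Matrix.mul_apply, Matrix.transpose_apply, covMat, Matrix.of_apply,
        Finset.sum_mul, Finset.mul_sum]
      rw [Finset.sum_comm]
      refine Finset.sum_congr rfl fun l _ => Finset.sum_congr rfl fun k _ => by ring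
    rw [key, hxCov, hH, aeval_transpose S hS]
    rw [← _root_.map_mul, ← _root_.map_mul]
    congr 1
    ring
end

section
/- Fix N ≥ 3 and let L be the N×N real circulant matrix indexed by ℤ/Nℤ generated by the vector v with v(0) = 2, v(1) = v(−1) = −1, and v(k) = 0 otherwise (L is the graph Laplacian of the unweighted cycle graph on N vertices). Then a real N×N matrix A equals q(L) for some real polynomial q if and only if A is a symmetric circulant matrix, i.e. A is the circulant matrix generated by some vector w with w(−k) = w(k) for all k ∈ ℤ/Nℤ. -/
open Polynomial Matrix

set_option linter.unusedSectionVars false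

namespace CycleLapAux

variable {N : ℕ} [NeZero N]

noncomputable def E (k : ZMod N) : Matrix (ZMod N) (ZMod N) ℝ :=
  Matrix.circulant (Pi.single k 1)

lemma E_zero : (E 0 : Matrix (ZMod N) (ZMod N) ℝ) = 1 :=
  Matrix.circulant_single_one ℝ (ZMod N)

lemma E_mul (k l : ZMod N) : (E k : Matrix (ZMod N) (ZMod N) ℝ) * E l = E (k + l) := by
  rw [E, E, E, Matrix.circulant_mul]
  ext i j
  simp only [Matrix.circulant_apply, Matrix.mulVec, dotProduct, Pi.single_apply, mul_ite,
    mul_one, mul_zero, Finset.sum_ite_eq', Finset.mem_univ, if_true]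
  simp [sub_eq_iff_eq_add]

lemma circulant_eq_sum (w : ZMod N → ℝ) :
    Matrix.circulant w = ∑ k : ZMod N, w k • E k := by
  ext i j
  simp [E, Matrix.sum_apply, Pi.single_apply]

lemma L_eq (hN : 3 ≤ N) :
    Matrix.circulant
      (fun k : ZMod N => if k = 0 then (2 : ℝ) else if k = 1 ∨ k = -1 then -1 else 0)
    = (1 : Matrix (ZMod N) (ZMod N) ℝ) + 1 - E 1 - E (-1) := by
  haveI : Fact (1 < N) := ⟨by omega⟩
  have h10 : (1 : ZMod N) ≠ 0 := one_ne_zero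
  have hm10 : (-1 : ZMod N) ≠ 0 := by simpa using h10
  have h1m1 : (1 : ZMod N) ≠ -1 := by
    intro h
    have h2 : ((2 : ℕ) : ZMod N) = 0 := by push_cast; linear_combination h
    have hd := (ZMod.natCast_eq_zero_iff 2 N).mp h2
    exact absurd (Nat.le_of_dvd (by norm_num) hd) (by omega)
  rw [← E_zero]
  ext i j
  simp only [Matrix.circulant_apply, Matrix.sub_apply, Matrix.add_apply, E, Pi.single_apply]
  set d := i - j with hd
  by_cases h0 : d = 0
  · simp only [h0, if_true, Ne.symm h10, Ne.symm hm10, if_false]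
    norm_num
  · by_cases h1 : d = 1
    · simp only [h0, h1, if_false, if_true, Ne.symm h1m1, h10, or_true, true_or]
      norm_num [h1m1, h10]
    · by_cases h2 : d = -1
      · simp only [h0, h1, h2, if_false, if_true, or_true]
        norm_num [h1m1.symm, hm10]
      · simp [h0, h1, h2]

lemma exists_poly (L : Matrix (ZMod N) (ZMod N) ℝ)
    (hL : L = (1 : Matrix (ZMod N) (ZMod N) ℝ) + 1 - E 1 - E (-1)) (n : ℕ) :
    ∃ q : Polynomial ℝ, aeval L q = E (n : ZMod N) + E (-(n : ZMod N)) := by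
  have hM : aeval L (C 1 + C 1 - X : Polynomial ℝ) = E 1 + E (-1) := by
    rw [_root_.map_sub, _root_.map_add, aeval_C, aeval_X, _root_.map_one, hL]
    abel
  have key : ∀ n : ℕ, (∃ q : Polynomial ℝ, aeval L q = E (n : ZMod N) + E (-(n : ZMod N))) ∧
      (∃ q : Polynomial ℝ, aeval L q = E ((n+1 : ℕ) : ZMod N) + E (-((n+1 : ℕ) : ZMod N))) := by
    intro n
    induction n with
    | zero =>
      constructor
      · refine ⟨C 1 + C 1, ?_⟩
        rw [_root_.map_add, aeval_C, _root_.map_one]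
        simp [E_zero]
      · refine ⟨C 1 + C 1 - X, ?_⟩
        rw [hM]
        norm_num
    | succ n ih =>
      refine ⟨ih.2, ?_⟩
      obtain ⟨q1, hq1⟩ := ih.1
      obtain ⟨q2, hq2⟩ := ih.2
      refine ⟨(C 1 + C 1 - X) * q2 - q1, ?_⟩
      rw [_root_.map_sub, _root_.map_mul, hM, hq1, hq2]
      have e1 : (E 1 + E (-1)) * (E ((n+1 : ℕ) : ZMod N) + E (-((n+1 : ℕ) : ZMod N)))
          = E ((n+2 : ℕ) : ZMod N) + E (-((n : ℕ) : ZMod N))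
            + (E ((n : ℕ) : ZMod N) + E (-((n+2 : ℕ) : ZMod N))) := by
        rw [add_mul, mul_add, mul_add, E_mul, E_mul, E_mul, E_mul]
        have a1 : (1 : ZMod N) + ((n+1 : ℕ) : ZMod N) = ((n+2 : ℕ) : ZMod N) := by
          push_cast; try ring
        have a2 : (1 : ZMod N) + (-((n+1 : ℕ) : ZMod N)) = -((n : ℕ) : ZMod N) := by
          push_cast; try ring
        have a3 : (-1 : ZMod N) + ((n+1 : ℕ) : ZMod N) = ((n : ℕ) : ZMod N) := by
          push_cast; try ring
        have a4 : (-1 : ZMod N) + (-((n+1 : ℕ) : ZMod N)) = -((n+2 : ℕ) : ZMod N) := by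
          push_cast; try ring
        rw [a1, a2, a3, a4]
      rw [e1]
      have : ((n + 1 + 1 : ℕ) : ZMod N) = ((n + 2 : ℕ) : ZMod N) := by push_cast; try ring
      rw [this]
      abel
  exact (key n).1

lemma mulVec_symm (v w : ZMod N → ℝ) (hv : ∀ k, v (-k) = v k) (hw : ∀ k, w (-k) = w k) :
    ∀ k, (Matrix.circulant v *ᵥ w) (-k) = (Matrix.circulant v *ᵥ w) k := by
  intro k
  simp only [Matrix.mulVec, dotProduct, Matrix.circulant_apply]
  refine Fintype.sum_equiv (Equiv.neg _) _ _ ?_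
  intro j
  simp only [Equiv.neg_apply]
  have h1 : v (-k - j) = v (k - -j) := by
    rw [← hv (k - -j)]; congr 1; ring
  rw [h1, ← hw j]

end CycleLapAux

open CycleLapAux

/-- For `N ≥ 3`, let `L` be the graph Laplacian of the unweighted cycle graph on
`N` vertices, i.e. the circulant matrix over `ℤ/Nℤ` generated by `v` with `v 0 = 2`,
`v 1 = v (-1) = -1` and `v k = 0` otherwise. A real `N×N` matrix `A` is a polynomial of `L`
iff `A` is a symmetric circulant matrix. -/
theorem cycle_laplacian_polynomial_iff_symmetric_circulant
    (N : ℕ) [NeZero N] (hN : 3 ≤ N)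
    (L : Matrix (ZMod N) (ZMod N) ℝ)
    (hL : L = Matrix.circulant
      (fun k : ZMod N => if k = 0 then (2 : ℝ) else if k = 1 ∨ k = -1 then -1 else 0))
    (A : Matrix (ZMod N) (ZMod N) ℝ) :
    (∃ q : Polynomial ℝ, A = aeval L q) ↔
      (∃ w : ZMod N → ℝ, (∀ k, w (-k) = w k) ∧ A = Matrix.circulant w) := by
  have hL' : L = (1 : Matrix (ZMod N) (ZMod N) ℝ) + 1 - E 1 - E (-1) := by
    rw [hL, L_eq hN]
  have hvsym : ∀ k : ZMod N,
      (fun k : ZMod N => if k = 0 then (2 : ℝ) else if k = 1 ∨ k = -1 then -1 else 0) (-k)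
      = (fun k : ZMod N => if k = 0 then (2 : ℝ) else if k = 1 ∨ k = -1 then -1 else 0) k := by
    intro k
    simp only [neg_eq_zero]
    by_cases h0 : k = 0
    · simp [h0]
    · have hiff2 : ∀ a : ZMod N, (-k = a) ↔ (k = -a) := fun a => by
        constructor <;> intro h <;> linear_combination -h
      simp [h0, hiff2, or_comm]
  constructor
  · rintro ⟨q, rfl⟩
    induction q using Polynomial.induction_on with
    | C a =>
      refine ⟨fun k => if k = 0 then a else 0, fun k => by simp [neg_eq_zero], ?_⟩
      rw [aeval_C, Algebra.algebraMap_eq_smul_one]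
      ext i j
      simp only [Matrix.smul_apply, Matrix.one_apply, Matrix.circulant_apply, smul_eq_mul,
        sub_eq_zero]
      by_cases h : i = j <;> simp [h]
    | add p q hp hq =>
      obtain ⟨w1, hw1, h1⟩ := hp
      obtain ⟨w2, hw2, h2⟩ := hq
      refine ⟨w1 + w2, fun k => by simp [hw1 k, hw2 k], ?_⟩
      rw [_root_.map_add, h1, h2, Matrix.circulant_add]
    | monomial n a hp =>
      obtain ⟨w1, hw1, h1⟩ := hp
      refine ⟨Matrix.circulant w1 *ᵥ
        (fun k : ZMod N => if k = 0 then (2 : ℝ) else if k = 1 ∨ k = -1 then -1 else 0),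
        mulVec_symm _ _ hw1 hvsym, ?_⟩
      have hx : (C a * X ^ (n + 1) : Polynomial ℝ) = (C a * X ^ n) * X := by ring
      rw [hx, _root_.map_mul, aeval_X, h1, hL, Matrix.circulant_mul]
  · rintro ⟨w, hw, rfl⟩
    have hq : ∀ k : ZMod N, ∃ q : Polynomial ℝ, aeval L q = E k + E (-k) := by
      intro k
      obtain ⟨q, hq⟩ := exists_poly L hL' k.val
      refine ⟨q, ?_⟩
      rwa [ZMod.natCast_val, ZMod.cast_id] at hq
    choose f hf using hq
    refine ⟨C (1/2 : ℝ) * ∑ k : ZMod N, C (w k) * f k, ?_⟩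
    rw [_root_.map_mul, map_sum, aeval_C]
    have hterm : ∀ k : ZMod N, aeval L (C (w k) * f k) = w k • (E k + E (-k)) := by
      intro k
      rw [_root_.map_mul, aeval_C, hf k, ← Algebra.smul_def]
    rw [Finset.sum_congr rfl fun k _ => hterm k]
    have hsum : (∑ k : ZMod N, w k • (E k + E (-k)))
        = Matrix.circulant w + Matrix.circulant w := by
      simp only [smul_add]
      rw [Finset.sum_add_distrib]
      have h2 : (∑ k : ZMod N, w k • E (-k)) = ∑ k : ZMod N, w k • E k := by
        refine Fintype.sum_equiv (Equiv.neg _) _ _ ?_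
        intro k
        simp only [Equiv.neg_apply, neg_neg, hw k]
      rw [h2, ← circulant_eq_sum]
    rw [hsum, ← Algebra.smul_def, ← two_smul ℝ (Matrix.circulant w), smul_smul]
    norm_num
end

section
/- Let S be a real symmetric N×N matrix, a, b, p real polynomials with P = p(S) positive semidefinite, and let σ, τ be real numbers with τ ≠ 0. Then the matrix M = a(S)² b(S)² P + σ² b(S)² + τ² I is symmetric positive definite (hence invertible), and the Kalman gain K = (a(S)² P + σ² I) b(S) M⁻¹ is a polynomial filter of S, i.e. there exists a real polynomial g with K = g(S). -/
open Polynomial Matrix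

/-- Transpose of a polynomial of a symmetric matrix is itself. -/
lemma aeval_transpose_self {N : ℕ} (S : Matrix (Fin N) (Fin N) ℝ) (hS : Sᵀ = S)
    (q : Polynomial ℝ) : (aeval S q)ᵀ = aeval S q := by
  induction q using Polynomial.induction_on' with
  | add p q hp hq => simp [map_add, Matrix.transpose_add, hp, hq]
  | monomial n c =>
      rw [Polynomial.aeval_monomial, Matrix.transpose_mul, Matrix.transpose_pow, hS,
        Algebra.algebraMap_eq_smul_one, Matrix.transpose_smul, Matrix.transpose_one,
        Matrix.smul_mul, Matrix.mul_smul, one_mul, mul_one]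

/-- The inverse of an invertible matrix is a polynomial in that matrix (Cayley–Hamilton). -/
lemma inv_eq_aeval_self {N : ℕ} (A : Matrix (Fin N) (Fin N) ℝ) (h : A.det ≠ 0) :
    ∃ r : Polynomial ℝ, A⁻¹ = aeval A r := by
  set χ := A.charpoly with hχ
  have hc : χ.coeff 0 ≠ 0 := by
    intro h0
    apply h
    rw [Matrix.det_eq_sign_charpoly_coeff, ← hχ, h0, mul_zero]
  set c := χ.coeff 0 with hcdef
  have hCH : aeval A χ = 0 := Matrix.aeval_self_charpoly A
  have hsplit : χ.divX * X + C c = χ := Polynomial.divX_mul_X_add χ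
  have h1 : aeval A χ.divX * A + c • (1 : Matrix (Fin N) (Fin N) ℝ) = 0 := by
    have h2 := congrArg (aeval A) hsplit
    rw [hCH] at h2
    simpa [map_add, _root_.map_mul, Polynomial.aeval_X, Polynomial.aeval_C,
      Algebra.algebraMap_eq_smul_one] using h2
  have hcomm : A * aeval A χ.divX = aeval A χ.divX * A := by
    have h3 : aeval A (X * χ.divX) = aeval A (χ.divX * X) := by rw [mul_comm]
    simpa [_root_.map_mul] using h3
  refine ⟨C (-c⁻¹) * χ.divX, ?_⟩
  have hright : A * ((-c⁻¹) • aeval A χ.divX) = 1 := by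
    rw [Matrix.mul_smul, hcomm]
    have h2 : aeval A χ.divX * A = -(c • 1) := by
      rw [eq_neg_iff_add_eq_zero]; exact h1
    rw [h2, smul_neg, neg_smul, neg_neg, smul_smul, inv_mul_cancel₀ hc, one_smul]
  rw [Matrix.inv_eq_right_inv hright, _root_.map_mul, Polynomial.aeval_C,
    Algebra.algebraMap_eq_smul_one, Matrix.smul_mul, one_mul]

/-- With `P = p(S)` positive semidefinite and `τ ≠ 0`, the matrix
`M = a(S)² b(S)² P + σ² b(S)² + τ² I` is symmetric positive definite (hence invertible), and
the Kalman gain `K = (a(S)² P + σ² I) b(S) M⁻¹` is a polynomial filter of `S`. -/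
theorem kalman_gain_is_polynomial_filter
    {N : ℕ} (S : Matrix (Fin N) (Fin N) ℝ) (hS : S.IsSymm)
    (a b p : Polynomial ℝ) (σ τ : ℝ) (hτ : τ ≠ 0)
    (P : Matrix (Fin N) (Fin N) ℝ) (hP : P = aeval S p) (hPsd : P.PosSemidef)
    (M : Matrix (Fin N) (Fin N) ℝ)
    (hM : M = (aeval S a) ^ 2 * (aeval S b) ^ 2 * P + σ ^ 2 • (aeval S b) ^ 2 + τ ^ 2 • 1)
    (K : Matrix (Fin N) (Fin N) ℝ)
    (hK : K = ((aeval S a) ^ 2 * P + σ ^ 2 • 1) * (aeval S b) * M⁻¹) :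
    M.PosDef ∧ ∃ g : Polynomial ℝ, K = aeval S g := by
  have hSt : Sᵀ = S := hS
  -- symmetry/hermitian-ness of polynomial filters
  have hsymm : ∀ q : Polynomial ℝ, (aeval S q)ᵀ = aeval S q :=
    fun q => aeval_transpose_self S hSt q
  have hherm : ∀ q : Polynomial ℝ, (aeval S q)ᴴ = aeval S q := by
    intro q
    ext i j
    simp only [Matrix.conjTranspose_apply, star_trivial]
    exact congrFun (congrFun (hsymm q) i) j
  -- part 1 : M is positive definite
  set Cm : Matrix (Fin N) (Fin N) ℝ := aeval S (a * b) with hCm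
  have hCt : Cmᴴ = Cm := hherm _
  have hcommPC : P * Cm = Cm * P := by
    rw [hP, hCm, ← _root_.map_mul, ← _root_.map_mul, mul_comm]
  have e1 : (aeval S a) ^ 2 * (aeval S b) ^ 2 * P = Cm * P * Cmᴴ := by
    rw [hCt, mul_assoc, ← hcommPC, ← mul_assoc, hCm, hP,
      ← map_pow, ← map_pow, ← _root_.map_mul, ← _root_.map_mul, ← _root_.map_mul,
      ← _root_.map_mul]
    congr 1
    ring
  have hT1 : ((aeval S a) ^ 2 * (aeval S b) ^ 2 * P).PosSemidef := by
    rw [e1]; exact hPsd.mul_mul_conjTranspose_same Cm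
  have hT2 : (σ ^ 2 • (aeval S b) ^ 2 : Matrix (Fin N) (Fin N) ℝ).PosSemidef := by
    have hBt : (σ • aeval S b)ᴴ = σ • aeval S b := by
      ext i j
      simp only [Matrix.conjTranspose_apply, Matrix.smul_apply, star_trivial, smul_eq_mul]
      exact congrArg (σ * ·) (congrFun (congrFun (hsymm b) i) j)
    have h4 : σ ^ 2 • (aeval S b) ^ 2 = (σ • aeval S b) * (σ • aeval S b)ᴴ := by
      rw [hBt, Matrix.smul_mul, Matrix.mul_smul, smul_smul, sq, sq]
    rw [h4]
    exact Matrix.posSemidef_self_mul_conjTranspose _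
  have hT3 : (τ ^ 2 • (1 : Matrix (Fin N) (Fin N) ℝ)).PosDef := by
    have heq : τ ^ 2 • (1 : Matrix (Fin N) (Fin N) ℝ) =
        Matrix.diagonal (fun _ => τ ^ 2) := by
      ext i j
      by_cases h : i = j <;> simp [h, Matrix.one_apply, Matrix.diagonal_apply]
    rw [heq]
    exact Matrix.PosDef.diagonal fun _ => by positivity
  have hMpd : M.PosDef := by
    rw [hM]
    exact Matrix.PosDef.posSemidef_add (hT1.add hT2) hT3
  refine ⟨hMpd, ?_⟩
  -- part 2 : K is a polynomial filter
  set m : Polynomial ℝ := a ^ 2 * b ^ 2 * p + C (σ ^ 2) * b ^ 2 + C (τ ^ 2) with hm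
  have hMa : M = aeval S m := by
    rw [hM, hP, hm]
    simp only [map_add, _root_.map_mul, map_pow, Polynomial.aeval_C,
      Algebra.algebraMap_eq_smul_one, _root_.smul_pow, one_pow, Matrix.smul_mul, one_mul]
  have hdet : M.det ≠ 0 := hMpd.det_pos.ne'
  obtain ⟨r, hr⟩ := inv_eq_aeval_self M hdet
  refine ⟨(a ^ 2 * p + C (σ ^ 2)) * b * r.comp m, ?_⟩
  have hinv : M⁻¹ = aeval S (r.comp m) := by
    rw [hr, Polynomial.aeval_comp, ← hMa]
  rw [hK, hinv, hP]
  simp only [_root_.map_mul, map_add, map_pow, Polynomial.aeval_C,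
    Algebra.algebraMap_eq_smul_one, _root_.smul_pow, one_pow]
end

section
/- Let S be a real symmetric N×N matrix, a, b, p real polynomials with P = p(S) positive semidefinite, and σ, τ real with τ ≠ 0. Let K = (a(S)² P + σ² I) b(S) (a(S)² b(S)² P + σ² b(S)² + τ² I)⁻¹ and define the updated error covariance P⁺ = (I − K b(S)) (a(S)² P + σ² I). Then P⁺ = τ² (a(S)² P + σ² I) (a(S)² b(S)² P + σ² b(S)² + τ² I)⁻¹. In particular P⁺ is a positive semidefinite polynomial filter of S. -/
open Polynomial Matrix

/-- Conjugation by a unitary matrix as an algebra homomorphism. -/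
def conjAlgHomAux {N : ℕ} (U : Matrix (Fin N) (Fin N) ℝ)
    (h1 : U * star U = 1) (h2 : star U * U = 1) :
    Matrix (Fin N) (Fin N) ℝ →ₐ[ℝ] Matrix (Fin N) (Fin N) ℝ where
  toFun X := U * X * star U
  map_one' := by show U * 1 * star U = 1; rw [mul_one, h1]
  map_mul' X Y := by
    show U * (X * Y) * star U = (U * X * star U) * (U * Y * star U)
    calc U * (X * Y) * star U = (U * X) * (star U * U) * (Y * star U) := by
          rw [h2]; noncomm_ring
      _ = U * X * star U * (U * Y * star U) := by noncomm_ring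
  map_zero' := by show U * 0 * star U = 0; simp
  map_add' X Y := by show U * (X + Y) * star U = _; noncomm_ring
  commutes' r := by
    show U * (algebraMap ℝ _ r) * star U = algebraMap ℝ _ r
    simp only [Algebra.algebraMap_eq_smul_one]
    rw [mul_smul_comm, mul_one, smul_mul_assoc, h1]

/-- With `P = p(S)` positive semidefinite, `τ ≠ 0`, and Kalman gain
`K = (a(S)² P + σ² I) b(S) (a(S)² b(S)² P + σ² b(S)² + τ² I)⁻¹`, the updated error covariance
`P⁺ = (I − K b(S))(a(S)² P + σ² I)` equals
`τ² (a(S)² P + σ² I)(a(S)² b(S)² P + σ² b(S)² + τ² I)⁻¹`; in particular `P⁺` is a positive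
semidefinite polynomial filter of `S`. -/
theorem kalman_updated_covariance
    {N : ℕ} (S : Matrix (Fin N) (Fin N) ℝ) (hS : S.IsSymm)
    (a b p : Polynomial ℝ) (σ τ : ℝ) (hτ : τ ≠ 0)
    (P : Matrix (Fin N) (Fin N) ℝ) (hP : P = aeval S p) (hPsd : P.PosSemidef)
    (K : Matrix (Fin N) (Fin N) ℝ)
    (hK : K = ((aeval S a) ^ 2 * P + σ ^ 2 • 1) * (aeval S b) *
      ((aeval S a) ^ 2 * (aeval S b) ^ 2 * P + σ ^ 2 • (aeval S b) ^ 2 + τ ^ 2 • 1)⁻¹)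
    (Pplus : Matrix (Fin N) (Fin N) ℝ)
    (hPplus : Pplus = (1 - K * aeval S b) * ((aeval S a) ^ 2 * P + σ ^ 2 • 1)) :
    Pplus = τ ^ 2 • (((aeval S a) ^ 2 * P + σ ^ 2 • 1) *
        ((aeval S a) ^ 2 * (aeval S b) ^ 2 * P + σ ^ 2 • (aeval S b) ^ 2 + τ ^ 2 • 1)⁻¹) ∧
      Pplus.PosSemidef ∧ ∃ q : Polynomial ℝ, Pplus = aeval S q := by
  classical
  have hSH : S.IsHermitian := by
    rwa [Matrix.IsHermitian, conjTranspose_eq_transpose_of_trivial]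
  set U : Matrix (Fin N) (Fin N) ℝ := (hSH.eigenvectorUnitary : Matrix (Fin N) (Fin N) ℝ) with hUdef
  set ev := hSH.eigenvalues with hevdef
  have hU1 : U * star U = 1 := hSH.eigenvectorUnitary.2.2
  have hU2 : star U * U = 1 := hSH.eigenvectorUnitary.2.1
  set φ := conjAlgHomAux U hU1 hU2 with hφdef
  set f : (Fin N → ℝ) → Matrix (Fin N) (Fin N) ℝ := fun v => φ (diagonal v) with hfdef
  have hfφ : ∀ v, f v = U * diagonal v * star U := fun _ => rfl
  have hfone : f 1 = 1 :=
    (congrArg φ (Matrix.diagonal_one (n := Fin N) (α := ℝ))).trans (map_one φ)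
  have hfmul : ∀ v w, f v * f w = f (v * w) := fun v w =>
    ((map_mul φ (diagonal v) (diagonal w)).symm).trans
      (congrArg φ (Matrix.diagonal_mul_diagonal v w))
  have hfadd : ∀ v w, f (v + w) = f v + f w := fun v w =>
    (congrArg φ (Matrix.diagonal_add v w).symm).trans (map_add φ _ _)
  have hfsub : ∀ v w, f (v - w) = f v - f w := fun v w =>
    (congrArg φ (Matrix.diagonal_sub v w).symm).trans (map_sub φ _ _)
  have hfsmul : ∀ (c : ℝ) v, c • f v = f (c • v) := fun c v =>
    ((map_smul φ c (diagonal v)).symm).trans (congrArg φ (Matrix.diagonal_smul c v).symm)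
  have hfsq : ∀ v, (f v) ^ 2 = f (fun i => v i ^ 2) := by
    intro v
    rw [sq, hfmul]
    exact congrArg f (funext fun i => by rw [Pi.mul_apply, sq])
  -- spectral decomposition
  have hSf : S = f ev := by
    rw [hfφ]
    convert hSH.spectral_theorem using 3
    rw [Unitary.conjStarAlgAut_apply]
    rfl
  have haq : ∀ q : Polynomial ℝ, aeval S q = f (fun i => eval (ev i) q) := by
    intro q
    have h1 : aeval S q = φ (aeval (diagonal ev) q) := by
      rw [hSf, hfdef]
      exact aeval_algHom_apply φ (diagonal ev) q
    have h2 : aeval (diagonal ev) q = diagonal (fun i => eval (ev i) q) := by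
      have h3 : aeval (diagonal ev) q
          = (Matrix.diagonalAlgHom (n := Fin N) (α := ℝ) ℝ) (aeval ev q) :=
        aeval_algHom_apply (Matrix.diagonalAlgHom ℝ) ev q
      rw [h3]
      show diagonal (aeval ev q) = diagonal (fun i => eval (ev i) q)
      refine congrArg diagonal (funext fun i => ?_)
      exact (aeval_algHom_apply (Pi.evalAlgHom ℝ (fun _ => ℝ) i) ev q).symm.trans
        (congrFun (Polynomial.coe_aeval_eq_eval (ev i)) q)
    rw [h1, h2]
  -- eigenvalue-level data
  set α : Fin N → ℝ := fun i => eval (ev i) a with hα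
  set β : Fin N → ℝ := fun i => eval (ev i) b with hβ
  set π : Fin N → ℝ := fun i => eval (ev i) p with hπdef
  have hA : aeval S a = f α := haq a
  have hB : aeval S b = f β := haq b
  have hPf : P = f π := by rw [hP]; exact haq p
  set x : Fin N → ℝ := fun i => α i ^ 2 * π i + σ ^ 2 with hx
  set m : Fin N → ℝ := fun i => α i ^ 2 * β i ^ 2 * π i + σ ^ 2 * β i ^ 2 + τ ^ 2 with hm
  have hπ : ∀ i, 0 ≤ π i := by
    intro i
    have hdiag : (diagonal π).PosSemidef := by
      have h4 : star U * P * star (star U) = diagonal π := by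
        rw [hPf, hfφ, star_star]
        calc star U * (U * diagonal π * star U) * U
            = (star U * U) * diagonal π * (star U * U) := by noncomm_ring
          _ = diagonal π := by rw [hU2, one_mul, mul_one]
      have h5 : (star U * P * star (star U)).PosSemidef :=
        hPsd.mul_mul_conjTranspose_same (star U)
      rwa [h4] at h5
    exact Matrix.posSemidef_diagonal_iff.mp hdiag i
  have hτ2 : 0 < τ ^ 2 := lt_of_le_of_ne (sq_nonneg τ) (Ne.symm (pow_ne_zero 2 hτ))
  have hmpos : ∀ i, 0 < m i := by
    intro i
    have h1 : 0 ≤ α i ^ 2 * β i ^ 2 * π i :=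
      mul_nonneg (mul_nonneg (sq_nonneg _) (sq_nonneg _)) (hπ i)
    have h2 : 0 ≤ σ ^ 2 * β i ^ 2 := mul_nonneg (sq_nonneg _) (sq_nonneg _)
    simp only [hm]
    linarith
  have hxnn : ∀ i, 0 ≤ x i := by
    intro i
    have := mul_nonneg (sq_nonneg (α i)) (hπ i)
    simp only [hx]
    nlinarith [sq_nonneg σ]
  -- matrix identities
  have hsmul1 : ∀ c : ℝ, (c • (1 : Matrix (Fin N) (Fin N) ℝ)) = f (fun _ => c) := by
    intro c
    have h : (c • (1 : Fin N → ℝ)) = fun _ => c := by funext i; simp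
    rw [← hfone, hfsmul, h]
  have hX : (aeval S a) ^ 2 * P + σ ^ 2 • (1 : Matrix (Fin N) (Fin N) ℝ) = f x := by
    rw [hA, hfsq, hPf, hfmul, hsmul1, ← hfadd]
    exact congrArg f (funext fun i => by simp only [hx, Pi.add_apply, Pi.mul_apply])
  have hM : (aeval S a) ^ 2 * (aeval S b) ^ 2 * P + σ ^ 2 • (aeval S b) ^ 2
      + τ ^ 2 • (1 : Matrix (Fin N) (Fin N) ℝ) = f m := by
    rw [hA, hB, hfsq, hfsq, hPf, hfmul, hfmul, hfsmul, hsmul1, ← hfadd, ← hfadd]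
    exact congrArg f (funext fun i => by
      simp only [hm, Pi.add_apply, Pi.mul_apply, Pi.smul_apply, smul_eq_mul])
  have hMinv : ((aeval S a) ^ 2 * (aeval S b) ^ 2 * P + σ ^ 2 • (aeval S b) ^ 2
      + τ ^ 2 • (1 : Matrix (Fin N) (Fin N) ℝ))⁻¹ = f m⁻¹ := by
    rw [hM]
    apply Matrix.inv_eq_right_inv
    rw [hfmul, ← hfone]
    exact congrArg f (funext fun i => by
      simp only [Pi.mul_apply, Pi.inv_apply, Pi.one_apply]
      exact mul_inv_cancel₀ (ne_of_gt (hmpos i)))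
  set w : Fin N → ℝ := fun i => τ ^ 2 * (x i * (m i)⁻¹) with hw
  have hwnn : ∀ i, 0 ≤ w i :=
    fun i => mul_nonneg (le_of_lt hτ2) (mul_nonneg (hxnn i) (inv_nonneg.mpr (le_of_lt (hmpos i))))
  have hPpf : Pplus = f w := by
    rw [hPplus, hK, hMinv, hX, hB, hfmul, hfmul, hfmul, ← hfone, ← hfsub, hfmul]
    refine congrArg f (funext fun i => ?_)
    have hmne : m i ≠ 0 := ne_of_gt (hmpos i)
    have hkey : x i * (β i * β i) + τ ^ 2 = m i := by simp only [hx, hm]; ring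
    simp only [hw, Pi.mul_apply, Pi.sub_apply, Pi.one_apply, Pi.inv_apply]
    have h6 : 1 - x i * β i * (m i)⁻¹ * β i = τ ^ 2 * (m i)⁻¹ := by
      field_simp
      linear_combination hkey
    rw [h6]
    ring
  refine ⟨?_, ?_, ?_⟩
  · rw [hPpf, hX, hMinv, hfmul, hfsmul]
    exact congrArg f (funext fun i => by
      simp only [hw, Pi.smul_apply, Pi.mul_apply, Pi.inv_apply, smul_eq_mul])
  · rw [hPpf, hfφ]
    exact (Matrix.posSemidef_diagonal_iff.mpr hwnn).mul_mul_conjTranspose_same U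
  · set g : ℝ → ℝ := fun t => τ ^ 2 * (((eval t a) ^ 2 * eval t p + σ ^ 2) *
      ((eval t a) ^ 2 * (eval t b) ^ 2 * eval t p + σ ^ 2 * (eval t b) ^ 2 + τ ^ 2)⁻¹) with hg
    refine ⟨Lagrange.interpolate (Finset.univ.image ev) id g, ?_⟩
    have hnode : (fun i => eval (ev i)
        (Lagrange.interpolate (Finset.univ.image ev) id g)) = w := by
      funext i
      rw [show (ev i) = id (ev i) from rfl,
        Lagrange.eval_interpolate_at_node g (Function.injective_id.injOn)
          (Finset.mem_image_of_mem ev (Finset.mem_univ i))]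
    rw [hPpf, haq, hnode]
end

section
/- Let S be a real symmetric N×N matrix and let (a_k), (b_k), k ≥ 1, be real polynomials, (σ_k), (τ_k) real numbers with τ_k ≠ 0 for all k, and P₀ = p₀(S) a positive semidefinite polynomial filter of S. Define recursively, for k ≥ 1, K_k = (a_k(S)² P_{k−1} + σ_k² I) b_k(S) (a_k(S)² b_k(S)² P_{k−1} + σ_k² b_k(S)² + τ_k² I)⁻¹ and P_k = (I − K_k b_k(S)) (a_k(S)² P_{k−1} + σ_k² I). Then for every k ≥ 1, the matrix (a_k(S)² b_k(S)² P_{k−1} + σ_k² b_k(S)² + τ_k² I) is invertible, and both K_k and P_k are polynomial filters of S, with P_k positive semidefinite. -/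
open Polynomial Matrix

section Aux

variable {N : ℕ}

/-- A polynomial of a symmetric matrix is symmetric. -/
lemma aeval_transpose_eq (S : Matrix (Fin N) (Fin N) ℝ) (hS : S.IsSymm)
    (p : Polynomial ℝ) : (aeval S p)ᵀ = aeval S p := by
  induction p using Polynomial.induction_on' with
  | add p q hp hq => rw [map_add, transpose_add, hp, hq]
  | monomial n c =>
      rw [aeval_monomial, ← Algebra.smul_def, transpose_smul, transpose_pow, hS]

lemma aeval_conjTranspose_eq (S : Matrix (Fin N) (Fin N) ℝ) (hS : S.IsSymm)
    (p : Polynomial ℝ) : (aeval S p)ᴴ = aeval S p := by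
  rw [conjTranspose_eq_transpose_of_trivial, aeval_transpose_eq S hS p]

lemma psd_smul {A : Matrix (Fin N) (Fin N) ℝ} (hA : A.PosSemidef) {c : ℝ}
    (hc : 0 ≤ c) : (c • A).PosSemidef := by
  refine ⟨?_, fun x => ?_⟩
  · rw [IsHermitian, conjTranspose_smul, star_trivial, hA.isHermitian.eq]
  · exact (hA.smul hc).2 x

lemma pd_smul_one {c : ℝ} (hc : 0 < c) :
    (c • (1 : Matrix (Fin N) (Fin N) ℝ)).PosDef := by
  refine ⟨?_, fun x hx => ?_⟩
  · rw [IsHermitian, conjTranspose_smul, star_trivial, conjTranspose_one]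
  · exact ((Matrix.PosDef.one (n := Fin N) (R := ℝ)).smul hc).2 hx

/-- The inverse of an invertible matrix is a polynomial in the matrix. -/
lemma exists_inv_poly (M : Matrix (Fin N) (Fin N) ℝ) (h : IsUnit M) :
    ∃ g : Polynomial ℝ, M⁻¹ = aeval M g := by
  have hd : IsUnit M.det := (Matrix.isUnit_iff_isUnit_det M).mp h
  set c := M.charpoly with hc
  have hc0 : c.coeff 0 ≠ 0 := by
    intro h0
    have := Matrix.det_eq_sign_charpoly_coeff M
    rw [← hc, h0, mul_zero] at this
    exact hd.ne_zero this
  refine ⟨(-(c.coeff 0))⁻¹ • c.divX, ?_⟩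
  apply Matrix.inv_eq_right_inv
  have h1 : aeval M (X * c.divX + C (c.coeff 0)) = 0 := by
    rw [Polynomial.X_mul_divX_add]; exact Matrix.aeval_self_charpoly M
  rw [map_add, _root_.map_mul, aeval_X, aeval_C, Algebra.algebraMap_eq_smul_one] at h1
  have h2 : M * aeval M c.divX = (-(c.coeff 0)) • 1 := by
    rw [neg_smul]; linear_combination (norm := module) h1
  rw [_root_.map_smul (aeval M), mul_smul_comm, h2, smul_smul,
    inv_mul_cancel₀ (by simpa using hc0), one_smul]

end Aux

/-- In the Kalman recursion with state polynomials `a k`, observation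
polynomials `b k`, noise levels `σ k`, `τ k ≠ 0`, and initial covariance `P 0 = p₀(S)`
positive semidefinite, at every step `k ≥ 1` the matrix
`a_k(S)² b_k(S)² P_{k-1} + σ_k² b_k(S)² + τ_k² I` is invertible, and both the Kalman gain
`K k` and the error covariance `P k` are polynomial filters of `S`, with `P k` positive
semidefinite. -/
theorem kalman_recursion_polynomial_filters
    {N : ℕ} (S : Matrix (Fin N) (Fin N) ℝ) (hS : S.IsSymm)
    (a b : ℕ → Polynomial ℝ) (σ τ : ℕ → ℝ) (hτ : ∀ k, τ k ≠ 0)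
    (p₀ : Polynomial ℝ)
    (P K : ℕ → Matrix (Fin N) (Fin N) ℝ)
    (hP0 : P 0 = aeval S p₀) (hP0psd : (P 0).PosSemidef)
    (hK : ∀ k, 1 ≤ k →
      K k = ((aeval S (a k)) ^ 2 * P (k - 1) + (σ k) ^ 2 • 1) * (aeval S (b k)) *
        ((aeval S (a k)) ^ 2 * (aeval S (b k)) ^ 2 * P (k - 1)
          + (σ k) ^ 2 • (aeval S (b k)) ^ 2 + (τ k) ^ 2 • 1)⁻¹)
    (hPrec : ∀ k, 1 ≤ k →
      P k = (1 - K k * aeval S (b k)) * ((aeval S (a k)) ^ 2 * P (k - 1) + (σ k) ^ 2 • 1)) :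
    ∀ k, 1 ≤ k →
      IsUnit ((aeval S (a k)) ^ 2 * (aeval S (b k)) ^ 2 * P (k - 1)
          + (σ k) ^ 2 • (aeval S (b k)) ^ 2 + (τ k) ^ 2 • 1) ∧
      (∃ g : Polynomial ℝ, K k = aeval S g) ∧
      (∃ q : Polynomial ℝ, P k = aeval S q) ∧ (P k).PosSemidef := by
  have hsmul : ∀ (c : ℝ) (r : Polynomial ℝ), aeval S (C c * r) = c • aeval S r := by
    intro c r
    rw [_root_.map_mul, aeval_C, ← Algebra.smul_def]
  have hsymm : ∀ r : Polynomial ℝ, (aeval S r)ᴴ = aeval S r :=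
    aeval_conjTranspose_eq S hS
  have step : ∀ k, 1 ≤ k → ∀ q : Polynomial ℝ, P (k - 1) = aeval S q →
      (P (k - 1)).PosSemidef →
      IsUnit ((aeval S (a k)) ^ 2 * (aeval S (b k)) ^ 2 * P (k - 1)
          + (σ k) ^ 2 • (aeval S (b k)) ^ 2 + (τ k) ^ 2 • 1) ∧
      (∃ g : Polynomial ℝ, K k = aeval S g) ∧
      (∃ q : Polynomial ℝ, P k = aeval S q) ∧ (P k).PosSemidef := by
    intro k hk q hq hqpsd
    have hτ2 : (0:ℝ) < (τ k) ^ 2 := by have := hτ k; positivity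
    set p' : Polynomial ℝ := (a k) ^ 2 * q + C ((σ k) ^ 2) with hp'def
    set m : Polynomial ℝ :=
      (a k) ^ 2 * (b k) ^ 2 * q + C ((σ k) ^ 2) * (b k) ^ 2 + C ((τ k) ^ 2) with hmdef
    have hP' : aeval S p' = (aeval S (a k)) ^ 2 * P (k - 1) + (σ k) ^ 2 • 1 := by
      rw [hq, hp'def, map_add, _root_.map_mul, map_pow, aeval_C, Algebra.algebraMap_eq_smul_one]
    have hM : aeval S m = (aeval S (a k)) ^ 2 * (aeval S (b k)) ^ 2 * P (k - 1)
        + (σ k) ^ 2 • (aeval S (b k)) ^ 2 + (τ k) ^ 2 • 1 := by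
      rw [hq, hmdef, map_add, map_add, _root_.map_mul, _root_.map_mul, map_pow, map_pow, hsmul,
        aeval_C, Algebra.algebraMap_eq_smul_one, map_pow]
    have hqpsd' : (aeval S q).PosSemidef := hq ▸ hqpsd
    have hP'psd : (aeval S p').PosSemidef := by
      have h1 : aeval S p' = aeval S (a k) * aeval S q * (aeval S (a k))ᴴ
          + (σ k) ^ 2 • 1 := by
        rw [hsymm, ← _root_.map_mul, ← _root_.map_mul, hp'def, map_add, aeval_C,
          Algebra.algebraMap_eq_smul_one]
        congr 2
        ring
      rw [h1]
      exact (hqpsd'.mul_mul_conjTranspose_same _).add (psd_smul .one (sq_nonneg _))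
    have hMpd : (aeval S m).PosDef := by
      have h1 : aeval S m = aeval S (b k) * aeval S p' * (aeval S (b k))ᴴ
          + (τ k) ^ 2 • 1 := by
        rw [hsymm, ← _root_.map_mul, ← _root_.map_mul,
          show m = (b k) * p' * (b k) + C ((τ k) ^ 2) by rw [hmdef, hp'def]; ring,
          map_add, aeval_C, Algebra.algebraMap_eq_smul_one]
      rw [h1]
      exact Matrix.PosDef.posSemidef_add (hP'psd.mul_mul_conjTranspose_same _)
        (pd_smul_one hτ2)
    have hMunit : IsUnit (aeval S m) := hMpd.isUnit
    have hMdet : IsUnit (aeval S m).det := (Matrix.isUnit_iff_isUnit_det _).mp hMunit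
    obtain ⟨g, hg⟩ := exists_inv_poly (aeval S m) hMunit
    set g' : Polynomial ℝ := g.comp m with hg'def
    have hg' : (aeval S m)⁻¹ = aeval S g' := by
      rw [hg, hg'def, aeval_comp]
    have hMW : aeval S (m * g') = 1 := by
      rw [_root_.map_mul, ← hg']
      exact Matrix.mul_nonsing_inv _ hMdet
    have hKk : K k = aeval S (p' * (b k) * g') := by
      rw [hK k hk, ← hP', ← hM, hg', _root_.map_mul, _root_.map_mul]
    have h1K : 1 - K k * aeval S (b k) = (τ k) ^ 2 • aeval S g' := by
      rw [hKk, ← _root_.map_mul, ← hMW, ← map_sub, ← hsmul]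
      congr 1
      rw [hmdef, hp'def]
      ring
    have hPk : P k = (τ k) ^ 2 • aeval S (g' * p') := by
      rw [hPrec k hk, ← hP', h1K, smul_mul_assoc, ← _root_.map_mul]
    refine ⟨hM ▸ hMunit, ⟨_, hKk⟩, ⟨C ((τ k) ^ 2) * (g' * p'), by rw [hPk, hsmul]⟩, ?_⟩
    have key : aeval S (g' * p') = aeval S (g' * p' * (b k)) *
        (aeval S (g' * p' * (b k)))ᴴ
        + (τ k) ^ 2 • (aeval S g' * aeval S p' * (aeval S g')ᴴ) := by
      have h0 : aeval S (g' * p') = aeval S (g' * p' * (m * g')) := by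
        rw [_root_.map_mul (aeval S) (g' * p') (m * g'), hMW, mul_one]
      rw [hsymm, hsymm, ← _root_.map_mul, ← _root_.map_mul, ← _root_.map_mul, ← hsmul,
        ← map_add, h0]
      congr 1
      rw [hmdef, hp'def]
      ring
    rw [hPk]
    refine psd_smul ?_ (sq_nonneg _)
    rw [key]
    have hx : (aeval S (g' * p' * (b k)) * (aeval S (g' * p' * (b k)))ᴴ).PosSemidef := by
      have := Matrix.PosSemidef.mul_mul_conjTranspose_same
        (Matrix.PosSemidef.one (n := Fin N) (R := ℝ)) (aeval S (g' * p' * (b k)))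
      simpa using this
    exact hx.add (psd_smul (hP'psd.mul_mul_conjTranspose_same _) (sq_nonneg _))
  have main : ∀ k, ∃ q : Polynomial ℝ, P k = aeval S q ∧ (P k).PosSemidef := by
    intro k
    induction k with
    | zero => exact ⟨p₀, hP0, hP0psd⟩
    | succ n ih =>
        obtain ⟨q, hq, hpsd⟩ := ih
        obtain ⟨_, _, hq', hpsd'⟩ := step (n + 1) (by omega) q
          (by simpa using hq) (by simpa using hpsd)
        obtain ⟨q', hq'⟩ := hq'
        exact ⟨q', hq', hpsd'⟩
  intro k hk
  obtain ⟨q, hq, hpsd⟩ := main (k - 1)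
  exact step k hk q hq hpsd
end

section
/- Let S be a real symmetric N×N matrix, a, b, p real polynomials with P = p(S) positive semidefinite and b(S) invertible, σ real, and τ ≠ 0 real. Let P_K = τ² (a(S)² P + σ² I) (a(S)² b(S)² P + σ² b(S)² + τ² I)⁻¹ be the Kalman estimation error covariance and P_inv = τ² (b(S)²)⁻¹ the inverse-filtering estimation error covariance. Then P_inv − P_K is symmetric positive definite, i.e. P_K ≺ P_inv. -/
open Polynomial Matrix

private lemma aeval_comm {N : ℕ} (S : Matrix (Fin N) (Fin N) ℝ) (r s : Polynomial ℝ) :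
    aeval S r * aeval S s = aeval S s * aeval S r :=
  ((Commute.all r s).map (aeval S)).eq

private lemma aeval_isSymm {N : ℕ} {S : Matrix (Fin N) (Fin N) ℝ} (hS : S.IsSymm)
    (r : Polynomial ℝ) : (aeval S r).IsSymm := by
  induction r using Polynomial.induction_on' with
  | add p q hp hq =>
      rw [map_add]; exact hp.add hq
  | monomial n c =>
      have : aeval S (monomial n c) = c • S ^ n := by
        simp [aeval_monomial, Algebra.algebraMap_eq_smul_one, smul_mul_assoc]
      rw [this, Matrix.IsSymm, transpose_smul, transpose_pow, hS]

private lemma conjT_of_symm {N : ℕ} {A : Matrix (Fin N) (Fin N) ℝ} (h : A.IsSymm) :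
    Aᴴ = A := by rw [conjTranspose_eq_transpose_of_trivial, h]

private lemma posdef_smul {N : ℕ} {M : Matrix (Fin N) (Fin N) ℝ} (hM : M.PosDef)
    {c : ℝ} (hc : 0 < c) : (c • M).PosDef := by
  refine posDef_iff_dotProduct_mulVec.mpr ⟨?_, fun x hx => ?_⟩
  · unfold Matrix.IsHermitian
    rw [conjTranspose_smul, hM.1.eq]
    simp
  · rw [smul_mulVec, dotProduct_smul]
    exact mul_pos hc (hM.dotProduct_mulVec_pos hx)

private lemma posdef_congr {N : ℕ} {M C : Matrix (Fin N) (Fin N) ℝ} (hM : M.PosDef)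
    (hC : IsUnit C) : (C * M * Cᴴ).PosDef := by
  refine posDef_iff_dotProduct_mulVec.mpr ⟨?_, fun x hx => ?_⟩
  · unfold Matrix.IsHermitian
    rw [conjTranspose_mul, conjTranspose_mul, conjTranspose_conjTranspose, hM.1.eq, mul_assoc]
  · have hinj : Function.Injective (Cᴴ.mulVec) :=
      mulVec_injective_iff_isUnit.mpr ((isUnit_conjTranspose C).mpr hC)
    have hx' : Cᴴ *ᵥ x ≠ 0 := by
      intro h
      exact hx (hinj (by simpa using h))
    have := hM.dotProduct_mulVec_pos hx'
    simpa only [star_mulVec, dotProduct_mulVec, vecMul_vecMul, conjTranspose_conjTranspose]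
      using this

/-- With `P = p(S)` positive semidefinite, `b(S)` invertible and `τ ≠ 0`, the
Kalman estimation error covariance
`P_K = τ² (a(S)² P + σ² I)(a(S)² b(S)² P + σ² b(S)² + τ² I)⁻¹` is strictly smaller, in the
positive-definite order, than the inverse-filtering error covariance `P_inv = τ² (b(S)²)⁻¹`:
`P_inv − P_K` is symmetric positive definite. -/
theorem kalman_beats_inverse_filtering
    {N : ℕ} (S : Matrix (Fin N) (Fin N) ℝ) (hS : S.IsSymm)
    (a b p : Polynomial ℝ) (σ τ : ℝ) (hτ : τ ≠ 0)
    (P : Matrix (Fin N) (Fin N) ℝ) (hP : P = aeval S p) (hPsd : P.PosSemidef)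
    (hb : IsUnit (aeval S b))
    (PK : Matrix (Fin N) (Fin N) ℝ)
    (hPK : PK = τ ^ 2 • (((aeval S a) ^ 2 * P + σ ^ 2 • 1) *
      ((aeval S a) ^ 2 * (aeval S b) ^ 2 * P + σ ^ 2 • (aeval S b) ^ 2 + τ ^ 2 • 1)⁻¹))
    (Pinv : Matrix (Fin N) (Fin N) ℝ)
    (hPinv : Pinv = τ ^ 2 • ((aeval S b) ^ 2)⁻¹) :
    (Pinv - PK).PosDef := by
  set A := aeval S a with hA
  set B := aeval S b with hB
  set Q : Matrix (Fin N) (Fin N) ℝ := A ^ 2 * P + σ ^ 2 • 1 with hQ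
  set M : Matrix (Fin N) (Fin N) ℝ := A ^ 2 * B ^ 2 * P + σ ^ 2 • B ^ 2 + τ ^ 2 • 1 with hM
  have hτ2 : (0:ℝ) < τ ^ 2 := by positivity
  have hAsymm : A.IsSymm := aeval_isSymm hS a
  have hBsymm : B.IsSymm := aeval_isSymm hS b
  -- Q is positive semidefinite
  have hA2P : (A ^ 2 * P).PosSemidef := by
    have h1 : A ^ 2 * P = A * P * Aᴴ := by
      rw [conjT_of_symm hAsymm, pow_two, mul_assoc, mul_assoc, hA, hP, aeval_comm S a p]
    rw [h1]
    exact hPsd.mul_mul_conjTranspose_same A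
  have hσ1 : ((σ ^ 2 : ℝ) • (1 : Matrix (Fin N) (Fin N) ℝ)).PosSemidef := by
    rw [smul_one_eq_diagonal]
    exact posSemidef_diagonal_iff.mpr fun i => by positivity
  have hQpsd : Q.PosSemidef := hA2P.add hσ1
  -- M = B * Q * Bᴴ + τ² • 1, hence positive definite
  have e1 : B * (A ^ 2 * P) * B = A ^ 2 * B ^ 2 * P := by
    rw [hA, hB, hP]
    simp only [← _root_.map_pow, ← _root_.map_mul]
    congr 1; ring
  have e2 : B * (σ ^ 2 • (1 : Matrix (Fin N) (Fin N) ℝ)) * B = σ ^ 2 • B ^ 2 := by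
    rw [mul_smul_comm, mul_one, smul_mul_assoc, ← pow_two]
  have hBQB : B * Q * Bᴴ = A ^ 2 * B ^ 2 * P + σ ^ 2 • B ^ 2 := by
    rw [conjT_of_symm hBsymm, hQ, mul_add, add_mul, e1, e2]
  have hτ1 : ((τ ^ 2 : ℝ) • (1 : Matrix (Fin N) (Fin N) ℝ)).PosDef := by
    rw [smul_one_eq_diagonal]
    exact posDef_diagonal_iff.mpr fun i => hτ2
  have hMpd : M.PosDef := by
    have hM' : M = B * Q * Bᴴ + τ ^ 2 • 1 := by rw [hBQB, hM]
    rw [hM']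
    exact Matrix.PosDef.posSemidef_add (hQpsd.mul_mul_conjTranspose_same B) hτ1
  have hMunit : IsUnit M := hMpd.isUnit
  have hB2unit : IsUnit (B ^ 2) := hb.pow 2
  -- key identity : B² * Q = M - τ² • 1
  have e1' : B ^ 2 * (A ^ 2 * P) = A ^ 2 * B ^ 2 * P := by
    rw [hA, hB, hP]
    simp only [← _root_.map_pow, ← _root_.map_mul]
    congr 1; ring
  have e2' : B ^ 2 * (σ ^ 2 • (1 : Matrix (Fin N) (Fin N) ℝ)) = σ ^ 2 • B ^ 2 := by
    rw [mul_smul_comm, mul_one]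
  have hB2Q : B ^ 2 * Q = A ^ 2 * B ^ 2 * P + σ ^ 2 • B ^ 2 := by
    rw [hQ, mul_add, e1', e2']
  have hkey : (B ^ 2)⁻¹ - Q * M⁻¹ = τ ^ 2 • ((B ^ 2)⁻¹ * M⁻¹) := by
    have h1 : Q * M⁻¹ = (B ^ 2)⁻¹ * (B ^ 2 * Q) * M⁻¹ := by
      rw [← mul_assoc, Matrix.nonsing_inv_mul _ ((Matrix.isUnit_iff_isUnit_det _).mp hB2unit),
        one_mul]
    have h2 : B ^ 2 * Q = M - τ ^ 2 • 1 := by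
      rw [hB2Q, hM]; abel
    rw [h1, h2, mul_sub, sub_mul, mul_assoc,
      Matrix.mul_nonsing_inv _ ((Matrix.isUnit_iff_isUnit_det _).mp hMunit), mul_one]
    simp [mul_smul_comm, smul_mul_assoc, sub_sub_cancel, mul_assoc]
  have hdiff : Pinv - PK = (τ ^ 2 * τ ^ 2) • ((B ^ 2)⁻¹ * M⁻¹) := by
    rw [hPinv, hPK, ← smul_sub, hkey, smul_smul]
  -- M commutes with B
  have e3 : A ^ 2 * B ^ 2 * P * B = B * (A ^ 2 * B ^ 2 * P) := by
    rw [hA, hB, hP]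
    simp only [← _root_.map_pow, ← _root_.map_mul]
    congr 1; ring
  have e4 : σ ^ 2 • B ^ 2 * B = B * σ ^ 2 • B ^ 2 := by
    rw [smul_mul_assoc, mul_smul_comm, ← pow_succ, ← pow_succ']
  have e5 : τ ^ 2 • (1 : Matrix (Fin N) (Fin N) ℝ) * B = B * τ ^ 2 • 1 := by
    rw [smul_mul_assoc, one_mul, mul_smul_comm, mul_one]
  have hcommBM : M * B = B * M := by
    rw [hM, add_mul, add_mul, mul_add, mul_add, e3, e4, e5]
  have hprod : (B ^ 2)⁻¹ * M⁻¹ = (B * M * Bᴴ)⁻¹ := by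
    rw [conjT_of_symm hBsymm, ← Matrix.mul_inv_rev]
    congr 1
    rw [pow_two, ← mul_assoc, hcommBM]
  rw [hdiff, hprod]
  exact posdef_smul ((posdef_congr hMpd hb).inv) (mul_pos hτ2 hτ2)
end

section
/- Let S be a real symmetric N×N matrix, a, b, g real polynomials, and σ, τ real numbers. Let x̂, x, e, ẽ be random vectors in ℝ^N with square-integrable components such that E[x̂] = 0, E[x] = 0, and the matrices E[x̂ x̂ᵀ], E[x xᵀ], E[x̂ xᵀ] are all polynomial filters of S, while E[x̂ eᵀ] = E[x̂ ẽᵀ] = E[x eᵀ] = E[x ẽᵀ] = E[e ẽᵀ] = 0, E[e eᵀ] = E[ẽ ẽᵀ] = I. Define x' = a(S) x + σ e, z = b(S) x' + τ ẽ, and the Kalman estimator x̂' = a(S) x̂ + g(S)(z − b(S) a(S) x̂). Then E[x̂'] = 0 and E[x̂' x̂'ᵀ] is a polynomial filter of S; that is, the Kalman estimator x̂' is a stationary graph signal. -/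
open MeasureTheory Polynomial Matrix

set_option linter.unusedSectionVars false

section Aux

variable {Ω : Type*} [MeasurableSpace Ω] {μ : Measure Ω} [IsProbabilityMeasure μ] {N : ℕ}

lemma KES.int_mul {f gg : Ω → ℝ} (hf : MemLp f 2 μ) (hg : MemLp gg 2 μ) :
    Integrable (fun ω => f ω * gg ω) μ := by
  have : MemLp (f • gg) 1 μ := hg.smul hf
  rw [memLp_one_iff_integrable] at this
  exact this

/-- `L2V μ u` : each component of `u` is in `L²`. -/
def KES.L2V (μ : Measure Ω) (u : Ω → Fin N → ℝ) : Prop :=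
  ∀ i, MemLp (fun ω => u ω i) 2 μ

namespace KES

lemma L2V.add {u v : Ω → Fin N → ℝ} (hu : L2V μ u) (hv : L2V μ v) : L2V μ (u + v) :=
  fun i => by exact (hu i).add (hv i)

lemma L2V.mulVec {u : Ω → Fin N → ℝ} (hu : L2V μ u) (M : Matrix (Fin N) (Fin N) ℝ) :
    L2V μ (fun ω => M.mulVec (u ω)) := by
  intro i
  simp only [Matrix.mulVec, dotProduct]
  exact memLp_finset_sum _ (fun k _ => (hu k).const_mul _)

lemma meanVec_add {u v : Ω → Fin N → ℝ} (hu : L2V μ u) (hv : L2V μ v) :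
    meanVec μ (u + v) = meanVec μ u + meanVec μ v := by
  funext i
  simp only [meanVec, Pi.add_apply]
  exact integral_add ((hu i).integrable one_le_two) ((hv i).integrable one_le_two)

lemma meanVec_mulVec {u : Ω → Fin N → ℝ} (hu : L2V μ u) (M : Matrix (Fin N) (Fin N) ℝ) :
    meanVec μ (fun ω => M.mulVec (u ω)) = M.mulVec (meanVec μ u) := by
  funext i
  simp only [meanVec, Matrix.mulVec, dotProduct]
  rw [integral_finset_sum _ (fun k _ => ((hu k).integrable one_le_two).const_mul _)]
  simp [integral_const_mul]

lemma covMat_add_left {u v y : Ω → Fin N → ℝ} (hu : L2V μ u) (hv : L2V μ v) (hy : L2V μ y) :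
    covMat μ (u + v) y = covMat μ u y + covMat μ v y := by
  ext i j
  simp only [covMat, Matrix.of_apply, Pi.add_apply, Matrix.add_apply, add_mul]
  exact integral_add (int_mul (hu i) (hy j)) (int_mul (hv i) (hy j))

lemma covMat_add_right {u v y : Ω → Fin N → ℝ} (hu : L2V μ u) (hv : L2V μ v) (hy : L2V μ y) :
    covMat μ y (u + v) = covMat μ y u + covMat μ y v := by
  ext i j
  simp only [covMat, Matrix.of_apply, Pi.add_apply, Matrix.add_apply, mul_add]
  exact integral_add (int_mul (hy i) (hu j)) (int_mul (hy i) (hv j))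

lemma covMat_transpose (u v : Ω → Fin N → ℝ) : (covMat μ u v)ᵀ = covMat μ v u := by
  ext i j
  simp [covMat, mul_comm]

lemma covMat_mulVec_both {u v : Ω → Fin N → ℝ} (hu : L2V μ u) (hv : L2V μ v)
    (M P : Matrix (Fin N) (Fin N) ℝ) :
    covMat μ (fun ω => M.mulVec (u ω)) (fun ω => P.mulVec (v ω)) = M * covMat μ u v * Pᵀ := by
  ext i j
  have hint : ∀ (k l : Fin N), Integrable (fun ω => (M i k * P j l) * (u ω k * v ω l)) μ :=
    fun k l => (int_mul (hu k) (hv l)).const_mul _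
  simp only [covMat, Matrix.of_apply, Matrix.mulVec, dotProduct]
  have h1 : ∀ ω : Ω, (∑ k, M i k * u ω k) * (∑ l, P j l * v ω l)
      = ∑ k, ∑ l, (M i k * P j l) * (u ω k * v ω l) := by
    intro ω
    rw [Finset.sum_mul_sum]
    exact Finset.sum_congr rfl fun k _ => Finset.sum_congr rfl fun l _ => by ring
  simp_rw [h1]
  rw [integral_finset_sum _ (fun k _ => integrable_finset_sum _ (fun l _ => hint k l))]
  have h2 : ∀ k : Fin N, ∫ ω, ∑ l, (M i k * P j l) * (u ω k * v ω l) ∂μ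
      = ∑ l, (M i k * P j l) * ∫ ω, u ω k * v ω l ∂μ := by
    intro k
    rw [integral_finset_sum _ (fun l _ => hint k l)]
    exact Finset.sum_congr rfl fun l _ => integral_const_mul _ _
  simp_rw [h2]
  simp only [Matrix.mul_apply, covMat, Matrix.of_apply, Matrix.transpose_apply,
    Finset.sum_mul, Finset.mul_sum]
  rw [Finset.sum_comm]
  exact Finset.sum_congr rfl fun l _ => Finset.sum_congr rfl fun k _ => by ring

lemma aeval_transpose {S : Matrix (Fin N) (Fin N) ℝ} (hS : S.IsSymm) (p : Polynomial ℝ) :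
    (aeval S p)ᵀ = aeval S p := by
  induction p using Polynomial.induction_on' with
  | add p q hp hq => simp [hp, hq]
  | monomial n c => simp [aeval_monomial, transpose_mul, transpose_pow, hS.eq,
      Algebra.algebraMap_eq_smul_one, transpose_smul, mul_smul_comm, smul_mul_assoc]

lemma smul_aeval (S : Matrix (Fin N) (Fin N) ℝ) (c : ℝ) (p : Polynomial ℝ) :
    c • aeval S p = aeval S (C c * p) := by
  simp [Algebra.smul_def]

end KES

end Aux

/-- The Kalman estimator is a stationary graph signal. Suppose `x̂`, `x` have
zero mean, the covariances `E[x̂ x̂ᵀ]`, `E[x xᵀ]`, `E[x̂ xᵀ]` are polynomial filters of the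
symmetric matrix `S`, and `e`, `ẽ` are standard white noises uncorrelated with `x̂`, `x` and
with each other. With the dynamics `x' = a(S) x + σ e`, observation `z = b(S) x' + τ ẽ`, and
Kalman update `x̂' = a(S) x̂ + g(S)(z − b(S) a(S) x̂)`, the estimator `x̂'` has zero mean and
its covariance `E[x̂' x̂'ᵀ]` is a polynomial filter of `S`. -/

theorem kalman_estimator_stationary
    {Ω : Type*} [MeasurableSpace Ω] (μ : Measure Ω) [IsProbabilityMeasure μ]
    {N : ℕ} (S : Matrix (Fin N) (Fin N) ℝ) (hS : S.IsSymm)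
    (a b g : Polynomial ℝ) (σ τ : ℝ)
    (xh x e et : Ω → Fin N → ℝ)
    (hxhL2 : ∀ i, MemLp (fun ω => xh ω i) 2 μ)
    (hxL2 : ∀ i, MemLp (fun ω => x ω i) 2 μ)
    (heL2 : ∀ i, MemLp (fun ω => e ω i) 2 μ)
    (hetL2 : ∀ i, MemLp (fun ω => et ω i) 2 μ)
    (hxhMean : meanVec μ xh = 0) (hxMean : meanVec μ x = 0)
    (hxhCov : ∃ q : Polynomial ℝ, covMat μ xh xh = aeval S q)
    (hxCov : ∃ q : Polynomial ℝ, covMat μ x x = aeval S q)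
    (hxhxCov : ∃ q : Polynomial ℝ, covMat μ xh x = aeval S q)
    (heMean : meanVec μ e = 0) (hetMean : meanVec μ et = 0)
    (heCov : covMat μ e e = 1) (hetCov : covMat μ et et = 1)
    (hxhe : covMat μ xh e = 0) (hxhet : covMat μ xh et = 0)
    (hxe : covMat μ x e = 0) (hxet : covMat μ x et = 0)
    (heet : covMat μ e et = 0)
    (x' z xh' : Ω → Fin N → ℝ)
    (hx' : ∀ ω, x' ω = (aeval S a).mulVec (x ω) + σ • e ω)
    (hz : ∀ ω, z ω = (aeval S b).mulVec (x' ω) + τ • et ω)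
    (hxh' : ∀ ω, xh' ω = (aeval S a).mulVec (xh ω)
      + (aeval S g).mulVec (z ω - (aeval S b).mulVec ((aeval S a).mulVec (xh ω)))) :
    meanVec μ xh' = 0 ∧ ∃ q : Polynomial ℝ, covMat μ xh' xh' = aeval S q := by
  obtain ⟨q1, hq1⟩ := hxhCov
  obtain ⟨q2, hq2⟩ := hxCov
  obtain ⟨q3, hq3⟩ := hxhxCov
  have hu1 : KES.L2V μ xh := hxhL2
  have hu2 : KES.L2V μ x := hxL2
  have hu3 : KES.L2V μ e := heL2
  have hu4 : KES.L2V μ et := hetL2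
  have hw : xh' = (fun ω => (aeval S (a - g * b * a)).mulVec (xh ω))
      + ((fun ω => (aeval S (g * b * a)).mulVec (x ω))
      + ((fun ω => (aeval S (Polynomial.C σ * (g * b))).mulVec (e ω))
      + (fun ω => (aeval S (Polynomial.C τ * g)).mulVec (et ω)))) := by
    funext ω
    simp only [Pi.add_apply, hxh' ω, hz ω, hx' ω, _root_.map_sub, _root_.map_mul,
      Polynomial.aeval_C, ← Algebra.smul_def, Matrix.smul_mulVec, Matrix.mulVec_add,
      Matrix.mulVec_smul, Matrix.sub_mulVec, Matrix.mulVec_sub, Matrix.mulVec_mulVec, mul_assoc]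
    abel
  have l1 := hu1.mulVec (aeval S (a - g * b * a))
  have l2 := hu2.mulVec (aeval S (g * b * a))
  have l3 := hu3.mulVec (aeval S (Polynomial.C σ * (g * b)))
  have l4 := hu4.mulVec (aeval S (Polynomial.C τ * g))
  have l34 := l3.add l4
  have l234 := l2.add l34
  have lW := l1.add l234
  have hq3' : covMat μ x xh = aeval S q3 := by
    rw [← KES.covMat_transpose, hq3, KES.aeval_transpose hS]
  have c31 : covMat μ e xh = 0 := by rw [← KES.covMat_transpose, hxhe, Matrix.transpose_zero]
  have c41 : covMat μ et xh = 0 := by rw [← KES.covMat_transpose, hxhet, Matrix.transpose_zero]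
  have c32 : covMat μ e x = 0 := by rw [← KES.covMat_transpose, hxe, Matrix.transpose_zero]
  have c42 : covMat μ et x = 0 := by rw [← KES.covMat_transpose, hxet, Matrix.transpose_zero]
  have c43 : covMat μ et e = 0 := by rw [← KES.covMat_transpose, heet, Matrix.transpose_zero]
  constructor
  · rw [hw, KES.meanVec_add l1 l234, KES.meanVec_add l2 l34, KES.meanVec_add l3 l4,
      KES.meanVec_mulVec hu1, KES.meanVec_mulVec hu2, KES.meanVec_mulVec hu3,
      KES.meanVec_mulVec hu4, hxhMean, hxMean, heMean, hetMean]
    simp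
  · refine ⟨((a - g * b * a) * q1 * (a - g * b * a) + (a - g * b * a) * q3 * (g * b * a))
      + (((g * b * a) * q3 * (a - g * b * a) + (g * b * a) * q2 * (g * b * a))
      + ((Polynomial.C σ * (g * b)) * (Polynomial.C σ * (g * b))
        + (Polynomial.C τ * g) * (Polynomial.C τ * g))), ?_⟩
    rw [hw, KES.covMat_add_left l1 l234 lW, KES.covMat_add_left l2 l34 lW,
      KES.covMat_add_left l3 l4 lW,
      KES.covMat_add_right l1 l234 l1, KES.covMat_add_right l2 l34 l1,
      KES.covMat_add_right l3 l4 l1,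
      KES.covMat_add_right l1 l234 l2, KES.covMat_add_right l2 l34 l2,
      KES.covMat_add_right l3 l4 l2,
      KES.covMat_add_right l1 l234 l3, KES.covMat_add_right l2 l34 l3,
      KES.covMat_add_right l3 l4 l3,
      KES.covMat_add_right l1 l234 l4, KES.covMat_add_right l2 l34 l4,
      KES.covMat_add_right l3 l4 l4]
    simp only [KES.covMat_mulVec_both hu1 hu1, KES.covMat_mulVec_both hu1 hu2,
      KES.covMat_mulVec_both hu1 hu3, KES.covMat_mulVec_both hu1 hu4,
      KES.covMat_mulVec_both hu2 hu1, KES.covMat_mulVec_both hu2 hu2,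
      KES.covMat_mulVec_both hu2 hu3, KES.covMat_mulVec_both hu2 hu4,
      KES.covMat_mulVec_both hu3 hu1, KES.covMat_mulVec_both hu3 hu2,
      KES.covMat_mulVec_both hu3 hu3, KES.covMat_mulVec_both hu3 hu4,
      KES.covMat_mulVec_both hu4 hu1, KES.covMat_mulVec_both hu4 hu2,
      KES.covMat_mulVec_both hu4 hu3, KES.covMat_mulVec_both hu4 hu4]
    rw [hq1, hq2, hq3, hq3', hxhe, hxhet, hxe, hxet, heet, c31, c41, c32, c42, c43,
      heCov, hetCov]
    simp only [Matrix.mul_zero, Matrix.zero_mul, add_zero, zero_add, Matrix.mul_one,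
      KES.aeval_transpose hS, ← _root_.map_mul, ← _root_.map_add]
end
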